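/- arXiv:math/0103055 — 6 statements merged into one kernel-verified Lean document; each statement's English description precedes it below -/
import Mathlib

section
/- Let $G$ be a row-finite directed graph. The source matrix $S_G : \prod_{G^1}\mathbb{Z} \to \prod_{G^0}\mathbb{Z}$ maps the image of $B_G - I$ into the image of $A_G - I$, and the induced map $\overline{S_G} : \operatorname{coker}(B_G - I) \to \operatorname{coker}(A_G - I)$ is a group isomorphism, with inverse induced by the range matrix $R_G$. -/
open scoped BigOperators

/-- Left multiplication by the vertex matrix `A_G` on `∏_{G⁰} ℤ`:
`(A y)(v) = ∑_{s(e)=v} y(r e)`. -/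
noncomputable def Aact {V E : Type*} (r s : E → V) (y : V → ℤ) (v : V) : ℤ :=
  ∑ᶠ e ∈ {e : E | s e = v}, y (r e)

/-- Left multiplication by the edge matrix `B_G` on `∏_{G¹} ℤ`:
`(B x)(e) = ∑_{s(f)=r(e)} x(f)`. -/
noncomputable def Bact {V E : Type*} (r s : E → V) (x : E → ℤ) (e : E) : ℤ :=
  ∑ᶠ f ∈ {f : E | s f = r e}, x f

/-- Left multiplication by the source matrix `S_G : ∏_{G¹}ℤ → ∏_{G⁰}ℤ`:
`(S x)(v) = ∑_{s(e)=v} x(e)`. -/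
noncomputable def Sact {V E : Type*} (s : E → V) (x : E → ℤ) (v : V) : ℤ :=
  ∑ᶠ e ∈ {e : E | s e = v}, x e

/-- Left multiplication by the range matrix `R_G : ∏_{G⁰}ℤ → ∏_{G¹}ℤ`:
`(R y)(e) = y(r e)`. -/
def Ract {V E : Type*} (r : E → V) (y : V → ℤ) (e : E) : ℤ := y (r e)

lemma finsum_mem_sub' {E : Type*} {S : Set E} (hS : S.Finite) (f g : E → ℤ) :
    ∑ᶠ e ∈ S, (f e - g e) = (∑ᶠ e ∈ S, f e) - ∑ᶠ e ∈ S, g e := by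
  rw [← hS.coe_toFinset, finsum_mem_coe_finset, finsum_mem_coe_finset,
    finsum_mem_coe_finset, Finset.sum_sub_distrib]

/-- `S_G` maps `im (B_G - I)` into `im (A_G - I)`, and the induced
map `coker (B_G - I) → coker (A_G - I)` is a group isomorphism with inverse
induced by `R_G`.  This is expressed by: (1) `S_G` carries the image of
`B_G - I` into the image of `A_G - I`; (2) `R_G` carries the image of
`A_G - I` into the image of `B_G - I` (so the inverse candidate is also
well defined); (3) `R_G ∘ S_G ≡ id` modulo `im (B_G - I)`; and (4)
`S_G ∘ R_G ≡ id` modulo `im (A_G - I)`.  Since `S_G` and `R_G` are additive,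
these conditions say exactly that the induced map `\overline{S_G}` is a group
isomorphism with inverse `\overline{R_G}`. -/
theorem sourceMatrix_induces_coker_iso
    {V E : Type*} [Countable V] [Countable E] (r s : E → V)
    (hrow : ∀ v : V, {e : E | s e = v}.Finite) :
    (∀ u : E → ℤ, ∃ m : V → ℤ,
      Sact s (fun e => Bact r s u e - u e) = fun v => Aact r s m v - m v) ∧
    (∀ y : V → ℤ, ∃ m : E → ℤ,
      Ract r (fun v => Aact r s y v - y v) = fun e => Bact r s m e - m e) ∧
    (∀ x : E → ℤ, ∃ m : E → ℤ,
      (fun e => Ract r (Sact s x) e - x e) = fun e => Bact r s m e - m e) ∧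
    (∀ y : V → ℤ, ∃ m : V → ℤ,
      (fun v => Sact s (Ract r y) v - y v) = fun v => Aact r s m v - m v) := by
  have hBS : ∀ (u : E → ℤ) (e : E), Bact r s u e = Sact s u (r e) := fun u e => rfl
  refine ⟨fun u => ⟨Sact s u, ?_⟩, fun y => ⟨Ract r y, ?_⟩, fun x => ⟨x, ?_⟩,
    fun y => ⟨y, ?_⟩⟩
  · funext v
    show Sact s (fun e => Bact r s u e - u e) v = Aact r s (Sact s u) v - Sact s u v
    unfold Sact Aact
    simp only [hBS]
    exact finsum_mem_sub' (hrow v) _ _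
  · funext e; rfl
  · funext e; rfl
  · funext v; rfl
end

section
/- Let $G$ be a row-finite directed graph with no sinks satisfying Condition (L) (every loop has an exit). Then there exists a vector $n \in \prod_{G^0}\mathbb{Z}$ such that (1) every entry of $(A_G - I)n$ is a nonnegative integer, and (2) for every vertex $v \in G^0$ there exists a vertex $w$ reachable from $v$ by a path with $((A_G - I)n)(w) \geq 1$. -/
open scoped BigOperators

/-- `l` is a path: consecutive edges are composable. -/
def IsPathList {V E : Type*} (r s : E → V) (l : List E) : Prop :=
  l.Chain' (fun a b => r a = s b)

/-- `l` is a loop: a nonempty path whose source equals its range. -/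
def IsLoopList {V E : Type*} (r s : E → V) (l : List E) : Prop :=
  IsPathList r s l ∧ ∃ h : l ≠ [], s (l.head h) = r (l.getLast h)

/-- The loop `l` has an exit: an edge `e` with the same source as some edge of
`l` but distinct from it. -/
def HasExit {V E : Type*} (s : E → V) (l : List E) : Prop :=
  ∃ e : E, ∃ f ∈ l, s e = s f ∧ e ≠ f

/-- Condition (L): every loop has an exit. -/
def CondL {V E : Type*} (r s : E → V) : Prop :=
  ∀ l : List E, l ≠ [] → IsLoopList r s l → HasExit s l

/-- `v ≥ w`: there is a (possibly empty) path from `v` to `w`. -/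
def Reach {V E : Type*} (r s : E → V) : V → V → Prop :=
  Relation.ReflTransGen (fun a b => ∃ e, s e = a ∧ r e = b)

/-
Call a vertex unbranched if no vertex reachable from it emits two edges. Off the unbranched set
take `n = 1`: there `(A n)(v) ≥ #s⁻¹(v) ≥ 1`, with `≥ 2` at a vertex emitting two edges, and
every such `v` reaches a vertex emitting two edges. An unbranched vertex emits exactly one edge,
so on the unbranched set the graph is the graph of a successor map, and Condition (L) says that
this map has no periodic points. A map without periodic points admits an integer height `h` with
`h (f x) = h x + 1`: choose a base point in each class of points with eventually equal orbits
and measure how far ahead of it a point is. Then `n = max 1 h` on the unbranched set is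
nondecreasing along edges and increases strictly once `h ≥ 1`.
-/

open Function Set

section Height

variable {α : Type*} {f : α → α}

def IterateMeet (f : α → α) (x y : α) : Prop := ∃ k m : ℕ, f^[k] x = f^[m] y

theorem iterateMeet_equivalence (f : α → α) : Equivalence (IterateMeet f) where
  refl _ := ⟨0, 0, rfl⟩
  symm := fun ⟨k, m, h⟩ => ⟨m, k, h.symm⟩
  trans := by
    rintro x y z ⟨k, m, h⟩ ⟨k', m', h'⟩
    refine ⟨k' + k, m + m', ?_⟩
    rw [iterate_add_apply, h, ← iterate_add_apply, add_comm k' m, iterate_add_apply, h',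
      ← iterate_add_apply]

theorem injective_iterate_apply_of_forall_notMem_periodicPts (hf : ∀ x, x ∉ periodicPts f)
    (c : α) : Injective fun k => f^[k] c := by
  suffices ∀ a d, f^[a] c = f^[a + d] c → d = 0 by
    intro a b hab
    rcases le_total a b with h | h
    · obtain ⟨d, rfl⟩ := Nat.exists_eq_add_of_le h
      simp [this a d hab]
    · obtain ⟨d, rfl⟩ := Nat.exists_eq_add_of_le h
      simp [this b d hab.symm]
  intro a d had
  by_contra hd
  refine hf (f^[a] c) (mk_mem_periodicPts (Nat.pos_of_ne_zero hd) ?_)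
  rw [IsPeriodicPt, IsFixedPt, ← iterate_add_apply, add_comm, ← had]

theorem iterate_sub_eq_of_forall_notMem_periodicPts (hf : ∀ x, x ∉ periodicPts f)
    {x c : α} {k m k' m' : ℕ} (h : f^[k] x = f^[m] c) (h' : f^[k'] x = f^[m'] c) :
    (m : ℤ) - k = m' - k' := by
  have : f^[k' + m] c = f^[k + m'] c := by
    rw [iterate_add_apply, ← h, ← iterate_add_apply, add_comm k', iterate_add_apply, h',
      ← iterate_add_apply]
  have := injective_iterate_apply_of_forall_notMem_periodicPts hf c this
  omega

theorem exists_height_of_forall_notMem_periodicPts (hf : ∀ x, x ∉ periodicPts f) :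
    ∃ h : α → ℤ, ∀ x, h (f x) = h x + 1 := by
  let S : Setoid α := ⟨IterateMeet f, iterateMeet_equivalence f⟩
  have hbase : ∀ x, IterateMeet f x (Quotient.out (⟦x⟧ : Quotient S)) := fun x =>
    S.symm (Quotient.mk_out (s := S) x)
  choose k m hkm using hbase
  refine ⟨fun x => m x - k x, fun x => ?_⟩
  have hsame : (⟦f x⟧ : Quotient S) = ⟦x⟧ := Quotient.sound ⟨0, 1, rfl⟩
  have hfx : f^[k x] (f x) = f^[m x + 1] (Quotient.out (⟦f x⟧ : Quotient S)) := by
    rw [hsame, ← iterate_succ_apply, iterate_succ_apply', hkm, ← iterate_succ_apply' f (m x)]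
  have := iterate_sub_eq_of_forall_notMem_periodicPts hf (hkm (f x)) hfx
  push_cast at this ⊢
  omega

theorem exists_height_of_mapsTo {S : Set α} (hS : MapsTo f S S)
    (hf : ∀ x ∈ S, x ∉ periodicPts f) : ∃ h : α → ℤ, ∀ x ∈ S, h (f x) = h x + 1 := by
  classical
  have hres : ∀ x, x ∉ periodicPts hS.restrict := by
    rintro x ⟨n, hn, hx⟩
    refine hf x x.2 (mk_mem_periodicPts hn ?_)
    simpa [IsPeriodicPt, IsFixedPt, Subtype.ext_iff, hS.coe_iterate_restrict] using hx
  obtain ⟨h, hh⟩ := exists_height_of_forall_notMem_periodicPts hres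
  refine ⟨fun x => if hx : x ∈ S then h ⟨x, hx⟩ else 0, fun x hx => ?_⟩
  simp only [hx, hS hx, dite_true]
  exact hh ⟨x, hx⟩

theorem height_iterate {S : Set α} (hS : MapsTo f S S) {h : α → ℤ}
    (hh : ∀ x ∈ S, h (f x) = h x + 1) {x : α} (hx : x ∈ S) (k : ℕ) :
    h (f^[k] x) = h x + k := by
  induction k with
  | zero => simp
  | succ k ih =>
    rw [iterate_succ_apply', hh _ (hS.iterate k hx), ih]
    push_cast
    ring

end Height

section Graph

variable {V E : Type*} {r s : E → V}

def unbranched (r s : E → V) : Set V :=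
  {v | ∀ w, Reach r s v w → {e | s e = w}.Subsingleton}

theorem ncard_le_Aact {v : V} (hfin : {e | s e = v}.Finite) {y : V → ℤ} (hy : ∀ w, 1 ≤ y w) :
    ({e | s e = v}.ncard : ℤ) ≤ Aact r s y v := by
  rw [Aact, finsum_mem_eq_finite_toFinset_sum _ hfin, ncard_eq_toFinset_card _ hfin]
  simpa using Finset.card_nsmul_le_sum _ _ 1 fun e _ => hy (r e)

theorem one_le_Aact {v : V} (hfin : {e | s e = v}.Finite) (hv : ∃ e, s e = v) {y : V → ℤ}
    (hy : ∀ w, 1 ≤ y w) : 1 ≤ Aact r s y v := by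
  have := (ncard_pos hfin).2 hv
  have := ncard_le_Aact (r := r) hfin hy
  omega

theorem two_le_Aact {v : V} (hfin : {e | s e = v}.Finite) (hv : ¬{e | s e = v}.Subsingleton)
    {y : V → ℤ} (hy : ∀ w, 1 ≤ y w) : 2 ≤ Aact r s y v := by
  have := one_lt_ncard_iff_nontrivial_and_finite.2 ⟨not_subsingleton_iff.1 hv, hfin⟩
  have := ncard_le_Aact (r := r) hfin hy
  omega

variable {next : V → E}

theorem reach_iterate (hnext : ∀ v, s (next v) = v) (v : V) (k : ℕ) :
    Reach r s v ((r ∘ next)^[k] v) := by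
  induction k with
  | zero => exact .refl
  | succ k ih =>
    rw [iterate_succ_apply']
    exact ih.tail ⟨next _, hnext _, rfl⟩

theorem mapsTo_unbranched (hnext : ∀ v, s (next v) = v) :
    MapsTo (r ∘ next) (unbranched r s) (unbranched r s) :=
  fun v hv w hw => hv w (.head ⟨next v, hnext v, rfl⟩ hw)

theorem Aact_of_mem_unbranched (hnext : ∀ v, s (next v) = v) {v : V}
    (hv : v ∈ unbranched r s) (y : V → ℤ) : Aact r s y v = y (r (next v)) := by
  rw [Aact, (hv v .refl).eq_singleton_of_mem (hnext v), finsum_mem_singleton]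

theorem isLoopList_of_isPeriodicPt (hnext : ∀ v, s (next v) = v) {v : V} {n : ℕ} (hn : 0 < n)
    (hv : IsPeriodicPt (r ∘ next) n v) :
    IsLoopList r s ((List.range n).map fun i => next ((r ∘ next)^[i] v)) := by
  obtain ⟨k, rfl⟩ := Nat.exists_eq_succ_of_ne_zero hn.ne'
  refine ⟨?_, by simp, ?_⟩
  · rw [IsPathList, List.Chain', List.isChain_map, List.isChain_range_succ]
    intro i _
    simp [hnext, iterate_succ_apply']
  · rw [IsPeriodicPt, IsFixedPt, iterate_succ_apply'] at hv
    simpa [hnext, List.getLast_map] using hv.symm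

theorem notMem_periodicPts_of_mem_unbranched (hL : CondL r s) (hnext : ∀ v, s (next v) = v)
    {v : V} (hv : v ∈ unbranched r s) : v ∉ periodicPts (r ∘ next) := by
  rintro ⟨n, hn, hper⟩
  obtain ⟨e, _, hf, hse, hne⟩ :=
    hL _ (by simpa using hn.ne') (isLoopList_of_isPeriodicPt hnext hn hper)
  obtain ⟨i, -, rfl⟩ := List.mem_map.mp hf
  exact hne (hv _ (reach_iterate hnext v i) (hse.trans (hnext _)) (hnext _))

end Graph

theorem exists_vector_nonneg_and_reach_pos_general
    {V E : Type*} (r s : E → V)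
    (hrow : ∀ v : V, {e : E | s e = v}.Finite)
    (hnosink : ∀ v : V, ∃ e : E, s e = v)
    (hL : CondL r s) :
    ∃ n : V → ℤ,
      (∀ v : V, 0 ≤ Aact r s n v - n v) ∧
      (∀ v : V, ∃ w : V, Reach r s v w ∧ 1 ≤ Aact r s n w - n w) := by
  classical
  choose next hnext using hnosink
  set T := unbranched r s
  have hT : MapsTo (r ∘ next) T T := mapsTo_unbranched hnext
  obtain ⟨h, hh⟩ := exists_height_of_mapsTo hT fun v hv =>
    notMem_periodicPts_of_mem_unbranched hL hnext hv
  set n : V → ℤ := fun v => if v ∈ T then max 1 (h v) else 1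
  have hn1 : ∀ v, 1 ≤ n v := fun v => by dsimp only [n]; split_ifs <;> simp
  have hnT : ∀ v ∈ T, Aact r s n v - n v = max 1 (h v + 1) - max 1 (h v) := fun v hv => by
    have hnext_mem : r (next v) ∈ T := hT hv
    simp [Aact_of_mem_unbranched hnext hv, n, hv, hnext_mem, ← hh v hv]
  refine ⟨n, fun v => ?_, fun v => ?_⟩
  · by_cases hv : v ∈ T
    · rw [hnT v hv]
      omega
    · simpa [n, hv] using one_le_Aact (hrow v) ⟨next v, hnext v⟩ hn1
  · by_cases hv : v ∈ T
    · refine ⟨_, reach_iterate hnext v (1 - h v).toNat, ?_⟩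
      rw [hnT _ (hT.iterate _ hv), height_iterate hT hh hv]
      omega
    · obtain ⟨w, hvw, hw⟩ : ∃ w, Reach r s v w ∧ ¬{e | s e = w}.Subsingleton := by
        simpa [T, unbranched] using hv
      have hwT : w ∉ T := fun hwT => hw (hwT w .refl)
      have := two_le_Aact (r := r) (hrow w) hw hn1
      refine ⟨w, hvw, ?_⟩
      simp only [n, hwT, if_false] at this ⊢
      omega

/-- for a countable row-finite graph with no sinks satisfying
Condition (L), there is a vector `n ∈ ∏_{G⁰}ℤ` with `(A_G - I)n ≥ 0`
entrywise, and such that every vertex reaches a vertex `w` with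
`((A_G - I)n)(w) ≥ 1`. -/
theorem exists_vector_nonneg_and_reach_pos
    {V E : Type*} [Countable V] [Countable E] (r s : E → V)
    (hrow : ∀ v : V, {e : E | s e = v}.Finite)
    (hnosink : ∀ v : V, ∃ e : E, s e = v)
    (hL : CondL r s) :
    ∃ n : V → ℤ,
      (∀ v : V, 0 ≤ Aact r s n v - n v) ∧
      (∀ v : V, ∃ w : V, Reach r s v w ∧ 1 ≤ Aact r s n w - n w) :=
  exists_vector_nonneg_and_reach_pos_general r s hrow hnosink hL
end

section
/- Let $G$ be a finite directed graph with no sinks satisfying Condition (L), and let $v \in G^0$. Then there exists a vector $n \in \prod_{G^0}\mathbb{N}$ such that every entry of $(A_G - I)n$ is a nonnegative integer and $((A_G - I)n)(v) \geq 1$. -/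
open scoped BigOperators

/-! Let `pathCount k w` be the number of paths of length `k` starting at `w`, so that
`A_G (pathCount k) = pathCount (k + 1)`. Without sinks `pathCount k ≤ pathCount (k + 1)`, and the
inequality is strict at `v` once some path of length `k` from `v` ends at a vertex emitting two
edges. Following a fixed outgoing edge from each vertex, the path from `v` eventually runs around a
loop; by Condition (L) that loop has an exit, which is such a vertex. -/

section PathCount

variable {V E : Type*} [Fintype E] (r s : E → V)

open Classical in
noncomputable def pathCount : ℕ → V → ℕ
  | 0, _ => 1
  | k + 1, w => ∑ e ∈ Finset.univ.filter (fun e => s e = w), pathCount k (r e)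

open Classical in
theorem pathCount_succ (k : ℕ) (w : V) :
    pathCount r s (k + 1) w =
      ∑ e ∈ Finset.univ.filter (fun e => s e = w), pathCount r s k (r e) :=
  rfl

theorem aact_pathCount (k : ℕ) (w : V) :
    Aact r s (fun u => (pathCount r s k u : ℤ)) w = pathCount r s (k + 1) w := by
  classical
  rw [Aact, pathCount_succ, ← Finset.coe_filter_univ, finsum_mem_coe_finset]
  push_cast
  rfl

variable {r s}

theorem pathCount_le_pathCount_succ (hnosink : ∀ v : V, ∃ e : E, s e = v) (k : ℕ) (w : V) :
    pathCount r s k w ≤ pathCount r s (k + 1) w := by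
  induction k generalizing w with
  | zero =>
    obtain ⟨e, he⟩ := hnosink w
    rw [pathCount_succ]
    exact Finset.single_le_sum (f := fun e => pathCount r s 0 (r e)) (fun _ _ => Nat.zero_le _)
      (by simpa using he)
  | succ k ih =>
    rw [pathCount_succ, pathCount_succ]
    exact Finset.sum_le_sum fun e _ => ih (r e)

theorem pathCount_lt_pathCount_succ {edge : V → E} (hedge : ∀ w, s (edge w) = w)
    {k : ℕ} {w : V} {e e' : E} (he : s e = (r ∘ edge)^[k] w) (he' : s e' = (r ∘ edge)^[k] w)
    (hne : e ≠ e') :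
    pathCount r s k w < pathCount r s (k + 1) w := by
  classical
  induction k generalizing w with
  | zero =>
    rw [pathCount_succ]
    simp only [pathCount, Finset.sum_const, smul_eq_mul, mul_one, Finset.one_lt_card]
    exact ⟨e, by simpa using he, e', by simpa using he', hne⟩
  | succ k ih =>
    rw [pathCount_succ, pathCount_succ]
    have hmono := pathCount_le_pathCount_succ (r := r) fun w => ⟨edge w, hedge w⟩
    refine Finset.sum_lt_sum (fun e _ => hmono k (r e)) ⟨edge w, by simp [hedge], ih ?_ ?_⟩
    · rwa [Function.iterate_succ_apply] at he
    · rwa [Function.iterate_succ_apply] at he'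

end PathCount

section Loops

variable {V E : Type*} {r s : E → V} {edge : V → E}

theorem isLoopList_of_isPeriodicPt_s10 (hedge : ∀ w, s (edge w) = w) {u : V} {m : ℕ}
    (hu : Function.IsPeriodicPt (r ∘ edge) (m + 1) u) :
    IsLoopList r s ((List.range (m + 1)).map fun t => edge ((r ∘ edge)^[t] u)) := by
  refine ⟨?_, by simp, ?_⟩
  · show List.IsChain _ _
    rw [List.isChain_map, List.isChain_range_succ]
    exact fun t _ => by rw [hedge, Function.iterate_succ_apply']; rfl
  · simp only [List.head_map, List.head_range, List.getLast_map, List.getLast_range, hedge,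
      Function.iterate_zero_apply, add_tsub_cancel_right]
    exact hu.symm.trans (Function.iterate_succ_apply' (r ∘ edge) m u)

theorem CondL.exists_ne_source_eq_iterate [Finite V] (hL : CondL r s)
    (hedge : ∀ w, s (edge w) = w) (v : V) :
    ∃ k e e', s e = (r ∘ edge)^[k] v ∧ s e' = (r ∘ edge)^[k] v ∧ e ≠ e' := by
  by_contra! hunique
  obtain ⟨i, j, hij, hiter⟩ := Set.finite_univ.exists_lt_map_eq_of_forall_mem
    (f := fun n => (r ∘ edge)^[n] v) fun _ => Set.mem_univ _
  set u := (r ∘ edge)^[i] v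
  have hu : Function.IsPeriodicPt (r ∘ edge) (j - i - 1 + 1) u := by
    rw [Function.IsPeriodicPt, Function.IsFixedPt, ← Function.iterate_add_apply,
      Nat.sub_one_add_one (by omega), Nat.sub_add_cancel hij.le]
    exact hiter.symm
  obtain ⟨e, f, hf, hsf, hne⟩ := hL _ (by simp) (isLoopList_of_isPeriodicPt_s10 hedge hu)
  obtain ⟨t, -, rfl⟩ := List.mem_map.mp hf
  have hsource : s (edge ((r ∘ edge)^[t] u)) = (r ∘ edge)^[t + i] v := by
    rw [hedge, Function.iterate_add_apply]
  exact hne (hunique (t + i) e _ (hsf.trans hsource) hsource)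

end Loops

/-- for a finite graph with no sinks satisfying Condition (L)
and any vertex `v`, there is a vector `n ∈ ∏_{G⁰}ℕ` with `(A_G - I)n ≥ 0`
entrywise and `((A_G - I)n)(v) ≥ 1`. -/
theorem exists_nat_vector_nonneg_and_pos_at
    {V E : Type*} [Fintype V] [Fintype E] (r s : E → V)
    (hnosink : ∀ v : V, ∃ e : E, s e = v)
    (hL : CondL r s) (v : V) :
    ∃ n : V → ℕ,
      (∀ w : V, 0 ≤ Aact r s (fun u => (n u : ℤ)) w - (n w : ℤ)) ∧
      1 ≤ Aact r s (fun u => (n u : ℤ)) v - (n v : ℤ) := by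
  have hmono := pathCount_le_pathCount_succ (r := r) hnosink
  choose edge hedge using hnosink
  obtain ⟨k, e, e', he, he', hne⟩ := hL.exists_ne_source_eq_iterate hedge v
  have hstrict := pathCount_lt_pathCount_succ hedge he he' hne
  refine ⟨pathCount r s k, fun w => ?_, ?_⟩ <;> rw [aact_pathCount]
  · exact sub_nonneg.mpr (mod_cast hmono k w)
  · omega
end

section
/- Let $G$ be the graph with vertices $v, w_1, w_2, \ldots$ where each $w_i$ has one loop and one edge to $v$, and $v$ has two loops, so that the vertex matrix (in ordering $w_1, w_2, \ldots, v$) satisfies $(A_G - I)(w_i, v) = 1$, $(A_G - I)(v,v) = 1$, $(A_G - I)(w_i, w_i) = 0$, and all other entries zero. Then for the vector $x \in \prod_{G^0}\mathbb{Z}$ with $x(w_i) = -i$ and $x(v) = 0$, there is no $n \in \prod_{G^0}\mathbb{Z}$ such that all entries of $x + (A_G - I)n$ are nonnegative. -/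
open scoped BigOperators

/-- Vertices of the graph of the Remark in §4: `none` is the vertex `v`,
`some i` is the vertex `w_{i+1}`. -/
abbrev Vtx := Option ℕ

/-- The matrix `A_G - I` of that graph: `(A_G - I)(w_i, v) = 1`,
`(A_G - I)(v, v) = 1`, and all other entries are `0`. -/
def AmI (u w : Vtx) : ℤ := if w = none then 1 else 0

/-- Left multiplication by `A_G - I` on `∏_{G⁰} ℤ`. -/
noncomputable def AmIact (n : Vtx → ℤ) (u : Vtx) : ℤ := ∑ᶠ w : Vtx, AmI u w * n w

/-- The vector `x` with `x(w_i) = -i` and `x(v) = 0`. -/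
def xvec : Vtx → ℤ
  | none => 0
  | some i => -(i + 1 : ℤ)

/-- there is no `n ∈ ∏_{G⁰}ℤ` such that every entry of
`x + (A_G - I)n` is nonnegative. -/
theorem no_shift_makes_nonneg :
    ¬ ∃ n : Vtx → ℤ, ∀ u : Vtx, 0 ≤ xvec u + AmIact n u := by
  rintro ⟨n, hn⟩
  have hact : ∀ u : Vtx, AmIact n u = n none := by
    intro u
    have : AmIact n u = AmI u none * n none := by
      apply finsum_eq_single
      intro w hw
      simp [AmI, hw]
    simpa [AmI] using this
  obtain ⟨k, hk⟩ := exists_nat_gt (n none)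
  have := hn (some k)
  rw [hact] at this
  simp only [xvec] at this
  omega
end

section
/- Let $G$ be a row-finite directed graph and $(E, v_0)$ a 1-sink extension of $G$. Let $\sigma$ be an assignment from paths/edges of $E$ to operators such that $\sigma$ comes from a representation of the Cuntz-Krieger relations of $E$ and $\sigma(p_{v_0})$ has rank 1. Then for every edge $e \in E^1 \setminus G^1$, the rank of $\sigma(s_e)$ equals $\# Z(r(e), v_0)$, the number of paths from $r(e)$ to $v_0$ all of whose edges lie in $E^1 \setminus G^1$. -/
open scoped BigOperators

/-- `(E, v₀)` is a 1-sink extension of the subgraph `G = (GV, GE)` of the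
row-finite graph `E = (VE, EE, r, s)`:  `H := GVᶜ` is finite, has no sources,
and contains exactly one sink `v₀`; no loop of `E` has all its vertices in
`H`; every edge outside `GE` has range in `H`; and sinks of `G` remain sinks
of `E`. -/
structure OneSinkExt {VE EE : Type*} (r s : EE → VE)
    (GV : Set VE) (GE : Set EE) (v₀ : VE) : Prop where
  subgraph : ∀ e ∈ GE, s e ∈ GV ∧ r e ∈ GV
  rowFinite : ∀ v : VE, {e : EE | s e = v}.Finite
  H_finite : (GVᶜ : Set VE).Finite
  H_noSource : ∀ v ∈ (GVᶜ : Set VE), ∃ e : EE, r e = v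
  sink_mem : v₀ ∈ (GVᶜ : Set VE)
  sink_isSink : ¬ ∃ e : EE, s e = v₀
  sink_unique : ∀ v ∈ (GVᶜ : Set VE), (¬ ∃ e : EE, s e = v) → v = v₀
  no_H_loop : ∀ l : List EE, l ≠ [] → IsPathList r s l →
      (∃ h : l ≠ [], s (l.head h) = r (l.getLast h)) →
      ¬ ∀ f ∈ l, s f ∈ (GVᶜ : Set VE)
  new_range : ∀ e : EE, e ∉ GE → r e ∈ (GVᶜ : Set VE)
  G_sinks : ∀ v ∈ GV, (¬ ∃ e ∈ GE, s e = v) → ¬ ∃ e : EE, s e = v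

/-- `Z(w, v₀)`: the set of paths from `w` to `v₀` all of whose edges lie
outside `GE` (the empty path counts when `w = v₀`). -/
def ZPaths {VE EE : Type*} (r s : EE → VE) (GE : Set EE) (v₀ w : VE) :
    Set (List EE) :=
  {l | IsPathList r s l ∧ (∀ e ∈ l, e ∉ GE) ∧
    ((l = [] ∧ w = v₀) ∨ ∃ h : l ≠ [], s (l.head h) = w ∧ r (l.getLast h) = v₀)}

/-!
Both sides satisfy the same recursion over the vertices `w` of `H`. At a vertex `w ≠ v₀` of `H`,
the summands `S e S e*` of `P w` are projections whose sum is a projection, hence mutually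
orthogonal, so `rank P w = ∑ rank (S e S e*)`; and `S e S e*`, `S e`, `S e* S e = P (r e)` all have
the same rank. Dually, `Z(w, v₀)` is the disjoint union of the sets `e · Z(r e, v₀)`. At the sink
both sides equal `1`. Since `H` is finite and contains no loop, following edges out of `H` is
well founded, so the two sides agree on all of `H`. Ranks are compared in `ℕ∞` (through
`Cardinal.toENat`), so no finite-dimensionality has to be carried through the induction.
-/

section Idempotents

open LinearMap

variable {R M : Type*} [Semiring R] [AddCommMonoid M] [Module R M]

theorem LinearMap.range_add_eq_sup_of_mul_eq_zero {p q : Module.End R M}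
    (hp : IsIdempotentElem p) (hq : IsIdempotentElem q) (hpq : p * q = 0) (hqp : q * p = 0) :
    range (p + q) = range p ⊔ range q := by
  refine le_antisymm (range_add_le p q) (sup_le ?_ ?_)
  · rintro _ ⟨x, rfl⟩
    exact ⟨p x, by simp [← Module.End.mul_apply, hp.eq, hqp]⟩
  · rintro _ ⟨x, rfl⟩
    exact ⟨q x, by simp [← Module.End.mul_apply, hq.eq, hpq]⟩

theorem LinearMap.disjoint_range_of_mul_eq_zero {p q : Module.End R M}
    (hp : IsIdempotentElem p) (hpq : p * q = 0) : Disjoint (range p) (range q) := by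
  rw [Submodule.disjoint_def]
  rintro _ ⟨x, rfl⟩ ⟨y, hy⟩
  rw [← hp.eq, Module.End.mul_apply, ← hy, ← Module.End.mul_apply, hpq, zero_apply]

open Cardinal in
theorem OrthogonalIdempotents.toENat_rank_range_sum {K V ι : Type*} [DivisionRing K]
    [AddCommGroup V] [Module K V] {e : ι → Module.End K V} (he : OrthogonalIdempotents e)
    (s : Finset ι) :
    toENat (Module.rank K (range (∑ i ∈ s, e i)))
      = ∑ i ∈ s, toENat (Module.rank K (range (e i))) := by
  classical
  induction s using Finset.induction_on with
  | empty => rw [Finset.sum_empty, Finset.sum_empty, range_zero, rank_bot, map_zero]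
  | insert a s ha ih =>
    have hsum_mul : (∑ i ∈ s, e i) * e a = 0 := by
      rw [Finset.sum_mul]
      exact Finset.sum_eq_zero fun i hi => he.ortho (ne_of_mem_of_not_mem hi ha)
    have hdisj := disjoint_range_of_mul_eq_zero (he.idem a) (he.mul_sum_of_notMem ha)
    rw [Finset.sum_insert ha, Finset.sum_insert ha, ← ih,
      range_add_eq_sup_of_mul_eq_zero (he.idem a) he.isIdempotentElem_sum
        (he.mul_sum_of_notMem ha) hsum_mul,
      ← map_add, ← Submodule.rank_sup_add_rank_inf_eq, hdisj.eq_bot, rank_bot, add_zero]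

end Idempotents

section CStarRing

variable {A : Type*} [NonUnitalNormedRing A] [StarRing A] [CStarRing A]

theorem mul_star_mul_eq_self_of_isIdempotentElem {a : A} (h : IsIdempotentElem (star a * a)) :
    a * (star a * a) = a := by
  set b := star a * a
  have hexpand : star (a * b - a) * (a * b - a) = b * b * b - b * b - (b * b - b) := by
    simp only [b, star_sub, star_mul, star_star]
    noncomm_ring
  have hzero : star (a * b - a) * (a * b - a) = 0 := by
    rw [hexpand, h.eq, h.eq, sub_self]
  exact sub_eq_zero.mp ((CStarRing.star_mul_self_eq_zero_iff _).mp hzero)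

theorem isStarProjection_mul_star_self_of_isIdempotentElem {a : A}
    (h : IsIdempotentElem (star a * a)) : IsStarProjection (a * star a) where
  isIdempotentElem := by
    rw [IsIdempotentElem, mul_assoc, ← mul_assoc (star a), ← mul_assoc,
      mul_star_mul_eq_self_of_isIdempotentElem h]
  isSelfAdjoint := IsSelfAdjoint.mul_star_self a

end CStarRing

theorem orthogonalIdempotents_of_sum_le_one {A ι : Type*} [NormedRing A] [StarRing A]
    [CStarRing A] [PartialOrder A] [StarOrderedRing A] [Fintype ι] {q : ι → A}
    (hq : ∀ i, IsStarProjection (q i)) (hsum : ∑ i, q i ≤ 1) : OrthogonalIdempotents q where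
  idem i := (hq i).isIdempotentElem
  ortho i j hij := by
    classical
    -- `∑ₖ (q k q j)⋆ (q k q j) = q j (∑ₖ q k) q j ≤ q j`, and the term `k = j` is already `q j`.
    have hterm : ∀ k, q j * q k * q j = star (q k * q j) * (q k * q j) := fun k => by
      rw [star_mul, (hq j).isSelfAdjoint.star_eq, (hq k).isSelfAdjoint.star_eq, ← mul_assoc,
        mul_assoc (q j) (q k) (q k), (hq k).isIdempotentElem.eq]
    have hle : ∑ k ∈ Finset.univ.erase j, star (q k * q j) * (q k * q j) ≤ 0 := by
      have := star_left_conjugate_le_conjugate hsum (q j)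
      rw [(hq j).isSelfAdjoint.star_eq, Finset.mul_sum, Finset.sum_mul, mul_one,
        (hq j).isIdempotentElem.eq, ← Finset.add_sum_erase _ _ (Finset.mem_univ j),
        (hq j).isIdempotentElem.eq, (hq j).isIdempotentElem.eq] at this
      simpa [hterm] using this
    have hnonneg : ∀ k ∈ Finset.univ.erase j, 0 ≤ star (q k * q j) * (q k * q j) :=
      fun k _ => star_mul_self_nonneg _
    have hzero := (Finset.sum_eq_zero_iff_of_nonneg hnonneg).mp
      (le_antisymm hle (Finset.sum_nonneg hnonneg)) i (by simpa using hij)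
    exact (CStarRing.star_mul_self_eq_zero_iff _).mp hzero

section Operators

open LinearMap Cardinal

variable {H : Type*} [NormedAddCommGroup H] [InnerProductSpace ℂ H] [CompleteSpace H]

namespace ContinuousLinearMap

theorem rank_range_star_mul_self (a : H →L[ℂ] H) :
    Module.rank ℂ (range (star a * a).toLinearMap) = Module.rank ℂ (range a.toLinearMap) := by
  have hker : ker (star a * a).toLinearMap = ker a.toLinearMap := by
    rw [star_eq_adjoint]; exact ker_adjoint_comp_self a
  rw [← (quotKerEquivRange _).rank_eq, ← (quotKerEquivRange _).rank_eq,
    (Submodule.quotEquivOfEq _ _ hker).rank_eq]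

theorem range_mul_star_self_of_isIdempotentElem {a : H →L[ℂ] H}
    (h : IsIdempotentElem (star a * a)) :
    range (a * star a).toLinearMap = range a.toLinearMap := by
  refine le_antisymm (range_comp_le_range _ _) ?_
  conv_lhs => rw [← mul_star_mul_eq_self_of_isIdempotentElem h, ← mul_assoc]
  exact range_comp_le_range _ _

end ContinuousLinearMap

open ContinuousLinearMap in
theorem IsStarProjection.toENat_rank_range_eq_finsum {ι : Type*} [Finite ι] {p : H →L[ℂ] H}
    {v : ι → H →L[ℂ] H} (hp : IsStarProjection p)
    (hv : ∀ i, IsIdempotentElem (star (v i) * v i)) (hsum : p = ∑ᶠ i, v i * star (v i)) :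
    toENat (Module.rank ℂ (range p.toLinearMap))
      = ∑ᶠ i, toENat (Module.rank ℂ (range (star (v i) * v i).toLinearMap)) := by
  have := Fintype.ofFinite ι
  rw [finsum_eq_sum_of_fintype] at hsum ⊢
  have hortho : OrthogonalIdempotents fun i => v i * star (v i) :=
    orthogonalIdempotents_of_sum_le_one
      (fun i => isStarProjection_mul_star_self_of_isIdempotentElem (hv i)) (hsum ▸ hp.le_one)
  rw [hsum, ← toLinearMapRingHom_apply, map_sum]
  refine ((hortho.map toLinearMapRingHom).toENat_rank_range_sum Finset.univ).trans
    (Finset.sum_congr rfl fun i _ => ?_)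
  rw [Function.comp_apply, toLinearMapRingHom_apply,
    range_mul_star_self_of_isIdempotentElem (hv i), rank_range_star_mul_self]

end Operators

section Paths

variable {VE EE : Type*} {r s : EE → VE} {GE : Set EE} {v₀ w : VE}

theorem isPathList_iff {l : List EE} : IsPathList r s l ↔ l.IsChain (fun a b => r a = s b) :=
  Iff.rfl

theorem nil_mem_ZPaths_iff : [] ∈ ZPaths r s GE v₀ w ↔ w = v₀ := by
  simp [ZPaths, isPathList_iff]

theorem cons_mem_ZPaths_iff {e : EE} {t : List EE} :
    e :: t ∈ ZPaths r s GE v₀ w ↔ s e = w ∧ e ∉ GE ∧ t ∈ ZPaths r s GE v₀ (r e) := by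
  cases t with
  | nil =>
    simp only [ZPaths, Set.mem_ofPred_eq, isPathList_iff, List.IsChain.singleton, List.IsChain.nil,
      List.forall_mem_cons, List.head_cons, List.getLast_singleton, List.cons_ne_nil,
      List.not_mem_nil, ne_eq, not_true_eq_false, not_false_eq_true, exists_true_left, false_and,
      IsEmpty.forall_iff, implies_true, true_and, false_or]
    tauto
  | cons f t =>
    simp only [ZPaths, Set.mem_ofPred_eq, isPathList_iff, List.isChain_cons_cons,
      List.forall_mem_cons, List.head_cons, List.getLast_cons_cons, List.cons_ne_nil, ne_eq,
      not_false_eq_true, exists_true_left, false_and, false_or]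
    tauto

theorem ZPaths_self_of_isSink (hsink : ¬ ∃ e, s e = v₀) : ZPaths r s GE v₀ v₀ = {[]} := by
  ext (_ | ⟨e, t⟩)
  · simp [nil_mem_ZPaths_iff]
  · simpa [cons_mem_ZPaths_iff] using fun hse _ _ => hsink ⟨e, hse⟩

theorem ZPaths_eq_iUnion (hw : w ≠ v₀) (hnew : ∀ e, s e = w → e ∉ GE) :
    ZPaths r s GE v₀ w = ⋃ e : {e | s e = w}, List.cons e.1 '' ZPaths r s GE v₀ (r e) := by
  ext (_ | ⟨e, t⟩)
  · simp [nil_mem_ZPaths_iff, hw]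
  · simp only [cons_mem_ZPaths_iff, Set.mem_iUnion, Set.mem_image, List.cons.injEq]
    constructor
    · rintro ⟨hse, -, ht⟩
      exact ⟨⟨e, hse⟩, t, ht, rfl, rfl⟩
    · rintro ⟨⟨e, hse⟩, t, ht, rfl, rfl⟩
      exact ⟨hse, hnew e hse, ht⟩

theorem encard_ZPaths_eq_finsum (hfin : {e | s e = w}.Finite) (hw : w ≠ v₀)
    (hnew : ∀ e, s e = w → e ∉ GE) :
    (ZPaths r s GE v₀ w).encard = ∑ᶠ e : {e | s e = w}, (ZPaths r s GE v₀ (r e)).encard := by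
  have := hfin.to_subtype
  rw [ZPaths_eq_iUnion hw hnew, Set.encard_iUnion_of_finite]
  · exact finsum_congr fun e => List.cons_injective.encard_image _
  · intro e f hef
    refine Set.disjoint_left.mpr ?_
    rintro _ ⟨t, -, rfl⟩ ⟨u, -, hu⟩
    exact hef (Subtype.ext (List.cons.inj hu).1.symm)

end Paths

section Descent

variable {VE EE : Type*} {r s : EE → VE} {GV : Set VE} {GE : Set EE} {v₀ : VE}

def HStep (r s : EE → VE) (GV : Set VE) (w v : VE) : Prop :=
  w ∉ GV ∧ ∃ e, s e = w ∧ r e = v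

open Relation

theorem exists_path_of_transGen_hStep {a c : VE} (h : TransGen (HStep r s GV) a c) :
    ∃ e t, s e = a ∧ IsPathList r s (e :: t) ∧ (∀ f ∈ e :: t, s f ∉ GV) ∧
      r ((e :: t).getLast (List.cons_ne_nil e t)) = c := by
  induction h using TransGen.head_induction_on with
  | single hstep =>
    obtain ⟨ha, e, hse, hre⟩ := hstep
    exact ⟨e, [], hse, List.isChain_singleton e, by simpa [hse] using ha, hre⟩
  | head hstep _ ih =>
    obtain ⟨ha, e, hse, hre⟩ := hstep
    obtain ⟨f, t, hsf, hpath, hsrc, hlast⟩ := ih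
    refine ⟨e, f :: t, hse, List.IsChain.cons_cons (hre.trans hsf.symm) hpath, ?_, hlast⟩
    rintro g (_ | ⟨_, hg⟩)
    · exact hse ▸ ha
    · exact hsrc g hg

namespace OneSinkExt

theorem not_transGen_hStep_self (hext : OneSinkExt r s GV GE v₀) (w : VE) :
    ¬ TransGen (HStep r s GV) w w := by
  intro h
  obtain ⟨e, t, hse, hpath, hsrc, hlast⟩ := exists_path_of_transGen_hStep h
  exact hext.no_H_loop (e :: t) (List.cons_ne_nil e t) hpath
    ⟨List.cons_ne_nil e t, hse.trans hlast.symm⟩ hsrc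

theorem hStep_target_not_mem (hext : OneSinkExt r s GV GE v₀) {w v : VE}
    (h : HStep r s GV w v) : v ∉ GV := by
  obtain ⟨hw, e, rfl, rfl⟩ := h
  exact hext.new_range e fun heG => hw (hext.subgraph e heG).1

theorem wellFounded_hStep (hext : OneSinkExt r s GV GE v₀) :
    WellFounded (flip (HStep r s GV)) := by
  let reach (w : VE) : Set VE := {u | ReflTransGen (HStep r s GV) w u}
  have hfinite (w : VE) : (reach w).Finite := by
    refine (hext.H_finite.insert w).subset fun u hu => ?_
    rcases ReflTransGen.cases_tail hu with rfl | ⟨b, -, hbu⟩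
    · exact Set.mem_insert _ _
    · exact Set.mem_insert_of_mem _ (hext.hStep_target_not_mem hbu)
  refine Subrelation.wf (fun {v w} (h : HStep r s GV w v) => ?_)
    (measure fun w => (reach w).ncard).wf
  refine Set.ncard_lt_ncard ((Set.ssubset_iff_of_subset fun u hu => ReflTransGen.head h hu).mpr
    ⟨w, ReflTransGen.refl, fun hvw => ?_⟩) (hfinite w)
  exact hext.not_transGen_hStep_self w (TransGen.head' h hvw)

end OneSinkExt

end Descent

open Cardinal LinearMap in
theorem OneSinkExt.toENat_rank_range_eq_encard_ZPaths {VE EE : Type*} {r s : EE → VE}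
    {GV : Set VE} {GE : Set EE} {v₀ : VE} (hext : OneSinkExt r s GV GE v₀)
    {H : Type*} [NormedAddCommGroup H] [InnerProductSpace ℂ H] [CompleteSpace H]
    {P : VE → (H →L[ℂ] H)} {S : EE → (H →L[ℂ] H)} (hP : ∀ v, IsStarProjection (P v))
    (hCK1 : ∀ e, star (S e) * S e = P (r e))
    (hCK2 : ∀ v : VE, (∃ e, s e = v) →
      P v = ∑ᶠ e ∈ {e : EE | s e = v}, S e * star (S e))
    (hrank1 : Module.finrank ℂ (range (P v₀).toLinearMap) = 1) {w : VE} (hw : w ∉ GV) :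
    toENat (Module.rank ℂ (range (P w).toLinearMap)) = (ZPaths r s GE v₀ w).encard := by
  induction w using hext.wellFounded_hStep.induction with | _ w ih => ?_
  by_cases hwv : w = v₀
  · subst hwv
    rw [ZPaths_self_of_isSink hext.sink_isSink, Set.encard_singleton, toENat_eq_one,
      Module.rank_eq_one_iff_finrank_eq_one, hrank1]
  have hout : ∃ e, s e = w := by_contra fun h => hwv (hext.sink_unique w hw h)
  have hnew : ∀ e, s e = w → e ∉ GE := fun e hse heG => hw (hse ▸ (hext.subgraph e heG).1)
  have := (hext.rowFinite w).to_subtype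
  rw [encard_ZPaths_eq_finsum (hext.rowFinite w) hwv hnew,
    (hP w).toENat_rank_range_eq_finsum (fun e => hCK1 e ▸ (hP _).isIdempotentElem)
      ((hCK2 w hout).trans (finsum_set_coe_eq_finsum_mem _).symm)]
  refine finsum_congr fun e => ?_
  rw [hCK1]
  exact ih (r e) ⟨hw, e, e.2, rfl⟩ (hext.hStep_target_not_mem ⟨hw, e, e.2, rfl⟩)

theorem rank_eq_card_ZPaths_general
    {VE EE : Type*} (r s : EE → VE)
    (GV : Set VE) (GE : Set EE) (v₀ : VE)
    (hext : OneSinkExt r s GV GE v₀)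
    {H : Type*} [NormedAddCommGroup H] [InnerProductSpace ℂ H] [CompleteSpace H]
    (P : VE → (H →L[ℂ] H)) (S : EE → (H →L[ℂ] H))
    (hproj : ∀ v, IsSelfAdjoint (P v) ∧ P v * P v = P v)
    (hCK1 : ∀ e, star (S e) * S e = P (r e))
    (hCK2 : ∀ v : VE, (∃ e, s e = v) →
      P v = ∑ᶠ e ∈ {e : EE | s e = v}, S e * star (S e))
    (hrank1 : Module.finrank ℂ (LinearMap.range (P v₀).toLinearMap) = 1) :
    ∀ e : EE, e ∉ GE →
      Module.finrank ℂ (LinearMap.range (S e).toLinearMap)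
        = (ZPaths r s GE v₀ (r e)).ncard := by
  intro e he
  have hP : ∀ v, IsStarProjection (P v) := fun v => ⟨(hproj v).2, (hproj v).1⟩
  have hrank := hext.toENat_rank_range_eq_encard_ZPaths hP hCK1 hCK2 hrank1 (hext.new_range e he)
  rw [Set.ncard_def, ← hrank, ← hCK1, ContinuousLinearMap.rank_range_star_mul_self]
  exact (Cardinal.toNat_toENat _).symm

/-- if `{S, P}` is a Cuntz-Krieger `E`-family of operators on a
Hilbert space coming from a representation of `C*(E)` for which the
projection `P v₀` at the sink has rank 1, then for each new edge
`e ∈ E¹ \ G¹` the rank of `S e` equals `# Z(r e, v₀)`. -/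
theorem rank_eq_card_ZPaths
    {VE EE : Type*} [Countable VE] [Countable EE] (r s : EE → VE)
    (GV : Set VE) (GE : Set EE) (v₀ : VE)
    (hext : OneSinkExt r s GV GE v₀)
    {H : Type*} [NormedAddCommGroup H] [InnerProductSpace ℂ H] [CompleteSpace H]
    (P : VE → (H →L[ℂ] H)) (S : EE → (H →L[ℂ] H))
    (hproj : ∀ v, IsSelfAdjoint (P v) ∧ P v * P v = P v)
    (horth : ∀ v w, v ≠ w → P v * P w = 0)
    (hCK1 : ∀ e, star (S e) * S e = P (r e))
    (hCK2 : ∀ v : VE, (∃ e, s e = v) →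
      P v = ∑ᶠ e ∈ {e : EE | s e = v}, S e * star (S e))
    (hrank1 : Module.finrank ℂ (LinearMap.range (P v₀).toLinearMap) = 1) :
    ∀ e : EE, e ∉ GE →
      Module.finrank ℂ (LinearMap.range (S e).toLinearMap)
        = (ZPaths r s GE v₀ (r e)).ncard :=
  rank_eq_card_ZPaths_general r s GV GE v₀ hext P S hproj hCK1 hCK2 hrank1
end

section
/- Let $G$ be a row-finite directed graph with no sinks, let $L \subseteq G^0$ be the set of vertices that can reach a loop (i.e., $v \in L$ iff there is a loop $x$ with $v \geq s(x_1)$), and let $M = G^0 \setminus L$. Then $M$ is either empty or infinite. -/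
/-
Choose for every vertex `v` an outgoing edge `f v` and put `g v = r (f v)`. The complement `M` of
`L` is closed under `g`, since an edge from `v` into `L` would put `v` in `L`. If `M` were finite
and nonempty, iterating `g` inside `M` would eventually revisit a vertex `u`, and the chosen edges
along that cycle form a loop at `u`, placing `u ∈ M` in `L`.
-/

open Function Set

section Loops

variable {V E : Type*} (r s : E → V)

def CanReachLoop (v : V) : Prop :=
  ∃ l : List E, ∃ h : l ≠ [], IsPathList r s l ∧
    s (l.head h) = r (l.getLast h) ∧ Reach r s v (s (l.head h))

variable {r s}

theorem CanReachLoop.of_reach {v w : V} (hvw : Reach r s v w) (hw : CanReachLoop r s w) :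
    CanReachLoop r s v := by
  obtain ⟨l, hl, hpath, hloop, hreach⟩ := hw
  exact ⟨l, hl, hpath, hloop, hvw.trans hreach⟩

theorem CanReachLoop.of_edge (e : E) (he : CanReachLoop r s (r e)) : CanReachLoop r s (s e) :=
  he.of_reach (.single ⟨e, rfl, rfl⟩)

theorem exists_path_iterate (f : V → E) (hf : ∀ v, s (f v) = v) (n : ℕ) (u : V) :
    ∃ l : List E, ∃ h : l ≠ [], IsPathList r s l ∧
      s (l.head h) = u ∧ r (l.getLast h) = (r ∘ f)^[n + 1] u := by
  induction n generalizing u with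
  | zero => exact ⟨[f u], List.cons_ne_nil _ _, List.isChain_singleton _, hf u, rfl⟩
  | succ n ih =>
    obtain ⟨l, hl, hpath, hhead, hlast⟩ := ih (r (f u))
    refine ⟨f u :: l, List.cons_ne_nil _ _, ?_, hf u, ?_⟩
    · obtain ⟨e, l', rfl⟩ := List.exists_cons_of_ne_nil hl
      exact List.isChain_cons_cons.mpr ⟨hhead.symm, hpath⟩
    · rw [List.getLast_cons hl, hlast, iterate_succ_apply]
      rfl

theorem canReachLoop_of_isPeriodicPt (f : V → E) (hf : ∀ v, s (f v) = v) {n : ℕ} {u : V}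
    (hu : IsPeriodicPt (r ∘ f) (n + 1) u) : CanReachLoop r s u := by
  obtain ⟨l, hl, hpath, hhead, hlast⟩ := exists_path_iterate f hf n u
  exact ⟨l, hl, hpath, by rw [hhead, hlast, hu.eq], hhead ▸ .refl⟩

end Loops

theorem Set.Finite.exists_isPeriodicPt_of_mapsTo {α : Type*} {g : α → α} {S : Set α}
    (hS : S.Finite) (hg : MapsTo g S S) (hne : S.Nonempty) :
    ∃ u ∈ S, ∃ n, IsPeriodicPt g (n + 1) u := by
  obtain ⟨u₀, hu₀⟩ := hne
  have horbit : ∀ k, g^[k] u₀ ∈ S := fun k => hg.iterate k hu₀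
  obtain ⟨i, j, hij, heq⟩ := hS.exists_lt_map_eq_of_forall_mem horbit
  refine ⟨g^[i] u₀, horbit i, j - i - 1, ?_⟩
  show g^[j - i - 1 + 1] (g^[i] u₀) = g^[i] u₀
  rw [← iterate_add_apply, show j - i - 1 + 1 + i = j by omega, heq]

theorem nonloop_set_empty_or_infinite_general
    {V E : Type*} (r s : E → V)
    (hnosink : ∀ v : V, ∃ e : E, s e = v) :
    ∀ L M : Set V,
      L = {v : V | ∃ l : List E, ∃ h : l ≠ [], IsPathList r s l ∧
            s (l.head h) = r (l.getLast h) ∧ Reach r s v (s (l.head h))} →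
      M = Lᶜ →
      M = ∅ ∨ M.Infinite := by
  rintro L M rfl rfl
  rw [or_iff_not_imp_left, ← ne_eq, ← nonempty_iff_ne_empty]
  intro hne hfin
  choose f hf using hnosink
  have hmaps : MapsTo (r ∘ f) {v | CanReachLoop r s v}ᶜ {v | CanReachLoop r s v}ᶜ :=
    fun v hv hgv => hv (hf v ▸ CanReachLoop.of_edge (f v) hgv)
  obtain ⟨u, hu, n, hper⟩ := hfin.exists_isPeriodicPt_of_mapsTo hmaps hne
  exact hu (canReachLoop_of_isPeriodicPt f hf hper)

/-- let `L` be the set of vertices that can reach a loop and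
`M = G⁰ \ L`.  For a countable row-finite graph with no sinks, `M` is either
empty or infinite. -/
theorem nonloop_set_empty_or_infinite
    {V E : Type*} [Countable V] [Countable E] (r s : E → V)
    (hrow : ∀ v : V, {e : E | s e = v}.Finite)
    (hnosink : ∀ v : V, ∃ e : E, s e = v) :
    ∀ L M : Set V,
      L = {v : V | ∃ l : List E, ∃ h : l ≠ [], IsPathList r s l ∧
            s (l.head h) = r (l.getLast h) ∧ Reach r s v (s (l.head h))} →
      M = Lᶜ →
      M = ∅ ∨ M.Infinite :=
  nonloop_set_empty_or_infinite_general r s hnosink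
end
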